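/- arXiv:0806.3831 — 9 statements merged into one kernel-verified Lean document; each statement's English description precedes it below -/
import Mathlib

section
/- A curvature-like (0,4)-tensor L on a vector space V with a hypercomplex structure (J₁,J₂,J₃) satisfying the Kähler-like conditions L(x,y,z,w) = εα L(x,y,Jα z, Jα w) = εα L(Jα x, Jα y, z, w) for all α = 1,2,3 (where ε₁=1, ε₂=ε₃=-1) also satisfies L(x,y,z,w) = εα L(x, Jα y, Jα z, w) for all α. -/
/-!
Fix `J = J₂` or `J₃` and put `A(x,y,z,w) = L(x,Jy,Jz,w) + L(x,y,z,w)`. Since `J² = -1`, the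
condition `L(x,y,z,w) = -L(x,y,Jz,Jw)` says that `J` may be moved across the last two slots,
which makes `A` antisymmetric in `(z,w)`; the first Bianchi identity applied to `(x,Jy,Jz,w)`
makes `A` symmetric in `(y,z)`. A form symmetric in one pair of adjacent slots and antisymmetric
in the next one vanishes, so `A = 0`. The case `J₁ = J₂J₃` follows by applying the `J₃` and the
`J₂` identities in turn.
-/

lemma eq_zero_of_symm_of_antisymm {α : Type*} (f : α → α → α → ℝ)
    (hsymm : ∀ a b c, f a b c = f b a c) (hanti : ∀ a b c, f a b c = -f a c b) (a b c : α) :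
    f a b c = 0 := by
  have h : f a b c = -f a b c := by
    calc f a b c = f b a c := hsymm a b c
      _ = -f b c a := hanti b a c
      _ = -f c b a := by rw [hsymm b c a]
      _ = f c a b := by rw [hanti c b a, neg_neg]
      _ = f a c b := hsymm c a b
      _ = -f a b c := hanti a c b
  linarith

section AntiKaehler

variable {V : Type*} [AddCommGroup V] [Module ℝ V]
  {L : V →ₗ[ℝ] V →ₗ[ℝ] V →ₗ[ℝ] V →ₗ[ℝ] ℝ} {J : V →ₗ[ℝ] V}

lemma apply_map_right_eq_of_anti_invariant (hsq : ∀ v, J (J v) = -v)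
    (hK : ∀ x y z w, L x y z w = -L x y (J z) (J w)) (x y z w : V) :
    L x y (J z) w = L x y z (J w) := by
  simpa [hsq] using hK x y (J z) w

lemma apply_map_map_middle_of_anti_invariant (hsq : ∀ v, J (J v) = -v)
    (ha1 : ∀ x y z w, L x y z w = -L y x z w)
    (ha2 : ∀ x y z w, L x y z w = -L x y w z)
    (hBianchi : ∀ x y z w, L x y z w + L y z x w + L z x y w = 0)
    (hKa : ∀ x y z w, L x y z w = -L x y (J z) (J w))
    (hKb : ∀ x y z w, L x y z w = -L (J x) (J y) z w) (x y z w : V) :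
    L x y z w = -L x (J y) (J z) w := by
  have hJ := apply_map_right_eq_of_anti_invariant hsq hKa
  have hA := eq_zero_of_symm_of_antisymm (fun y z w => L x (J y) (J z) w + L x y z w)
    (fun y z w => by
      have := hBianchi x (J y) (J z) w; have := hBianchi x y z w
      have := hKb y z x w; have := ha1 (J z) x (J y) w; have := ha1 z x y w
      linarith)
    (fun y z w => by
      have := hJ x (J y) w z; have := ha2 x (J y) (J z) w; have := ha2 x y z w
      linarith)
    y z w
  linarith

end AntiKaehler

theorem stmt_2_general (V : Type*) [AddCommGroup V] [Module ℝ V]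
    (J1 J2 J3 : V →ₗ[ℝ] V)
    (L : V →ₗ[ℝ] V →ₗ[ℝ] V →ₗ[ℝ] V →ₗ[ℝ] ℝ)
    (h2sq : ∀ v, J2 (J2 v) = -v) (h3sq : ∀ v, J3 (J3 v) = -v)
    (h23 : ∀ v, J2 (J3 v) = J1 v)
    (ha1 : ∀ x y z w, L x y z w = -L y x z w)
    (ha2 : ∀ x y z w, L x y z w = -L x y w z)
    (hBianchi : ∀ x y z w, L x y z w + L y z x w + L z x y w = 0)
    (hK2a : ∀ x y z w, L x y z w = -L x y (J2 z) (J2 w))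
    (hK2b : ∀ x y z w, L x y z w = -L (J2 x) (J2 y) z w)
    (hK3a : ∀ x y z w, L x y z w = -L x y (J3 z) (J3 w))
    (hK3b : ∀ x y z w, L x y z w = -L (J3 x) (J3 y) z w) :
    (∀ x y z w, L x y z w = L x (J1 y) (J1 z) w) ∧
    (∀ x y z w, L x y z w = -L x (J2 y) (J2 z) w) ∧
    (∀ x y z w, L x y z w = -L x (J3 y) (J3 z) w) := by
  have k2 := apply_map_map_middle_of_anti_invariant h2sq ha1 ha2 hBianchi hK2a hK2b
  have k3 := apply_map_map_middle_of_anti_invariant h3sq ha1 ha2 hBianchi hK3a hK3b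
  refine ⟨fun x y z w => ?_, k2, k3⟩
  rw [← h23 y, ← h23 z, k3 x y z w, k2 x (J3 y) (J3 z) w, neg_neg]

theorem stmt_2 (V : Type*) [AddCommGroup V] [Module ℝ V]
    (J1 J2 J3 : V →ₗ[ℝ] V)
    (L : V →ₗ[ℝ] V →ₗ[ℝ] V →ₗ[ℝ] V →ₗ[ℝ] ℝ)
    (h1sq : ∀ v, J1 (J1 v) = -v) (h2sq : ∀ v, J2 (J2 v) = -v) (h3sq : ∀ v, J3 (J3 v) = -v)
    (h23 : ∀ v, J2 (J3 v) = J1 v) (h32 : ∀ v, J3 (J2 v) = -J1 v)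
    (h31 : ∀ v, J3 (J1 v) = J2 v) (h13 : ∀ v, J1 (J3 v) = -J2 v)
    (h12 : ∀ v, J1 (J2 v) = J3 v) (h21 : ∀ v, J2 (J1 v) = -J3 v)
    (ha1 : ∀ x y z w, L x y z w = -L y x z w)
    (ha2 : ∀ x y z w, L x y z w = -L x y w z)
    (hBianchi : ∀ x y z w, L x y z w + L y z x w + L z x y w = 0)
    (hK1a : ∀ x y z w, L x y z w = L x y (J1 z) (J1 w))
    (hK1b : ∀ x y z w, L x y z w = L (J1 x) (J1 y) z w)
    (hK2a : ∀ x y z w, L x y z w = -L x y (J2 z) (J2 w))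
    (hK2b : ∀ x y z w, L x y z w = -L (J2 x) (J2 y) z w)
    (hK3a : ∀ x y z w, L x y z w = -L x y (J3 z) (J3 w))
    (hK3b : ∀ x y z w, L x y z w = -L (J3 x) (J3 y) z w) :
    (∀ x y z w, L x y z w = L x (J1 y) (J1 z) w) ∧
    (∀ x y z w, L x y z w = -L x (J2 y) (J2 z) w) ∧
    (∀ x y z w, L x y z w = -L x (J3 y) (J3 z) w) :=
  stmt_2_general V J1 J2 J3 L h2sq h3sq h23 ha1 ha2 hBianchi hK2a hK2b hK3a hK3b
end

section
/- Every Kähler-like tensor on an almost (H,G)-manifold is zero. That is, if L is a (0,4)-tensor on a vector space with hypercomplex structure (J₁,J₂,J₃) which is curvature-like (antisymmetric in the first pair, antisymmetric in the second pair, satisfying the first Bianchi identity) and satisfies L(x,y,z,w) = εα L(x,y,Jα z, Jα w) = εα L(Jα x, Jα y,z,w) for all α = 1,2,3 with ε₁ = 1, ε₂ = ε₃ = -1, then L = 0. -/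
/-! Writing `ε = -1` in the first pair as `L (J x) y z w = L x (J y) z w`, four instances of
the Bianchi identity show that `J₂` and `J₃` can be moved from the first slot to the third:
`L (J x) y z w = L x y (J z) w`. Since `J₁ = J₂ J₃` and `J₃ J₂ = -J₁`, the structure `J₁` then
moves with a sign change, `L (J₁ x) y z w = -L x y (J₁ z) w`. Combined with `ε₁ = 1` in the first
pair this gives `L x y z w = L y x z w`, so antisymmetry forces `L = 0`. -/

namespace KaehlerLike

variable {K V : Type*} [Field K] [AddCommGroup V] [Module K V]
  (J : V →ₗ[K] V) (L : V →ₗ[K] V →ₗ[K] V →ₗ[K] V →ₗ[K] K)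

-- `map_neg` does not apply here: instance search fails to find `Neg` on the triply nested
-- space of linear maps `V →ₗ[K] V →ₗ[K] V →ₗ[K] K`, so negation goes through `(-1) • a`.
theorem apply_neg_first (a b c d : V) : L (-a) b c d = -L a b c d := by
  rw [← neg_one_smul K a, L.map_smul]
  simp only [LinearMap.smul_apply, smul_eq_mul, neg_one_mul]

theorem apply_J_first_eq_neg_mul_apply_J_second (ε : K) (hJ : ∀ v, J (J v) = -v)
    (hK : ∀ x y z w, L x y z w = ε * L (J x) (J y) z w) (x y z w : V) :
    L (J x) y z w = -ε * L x (J y) z w := by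
  rw [hK (J x), hJ, apply_neg_first]
  ring

theorem apply_J_first_eq_apply_J_third [CharZero K] (hJ : ∀ v, J (J v) = -v)
    (hK : ∀ x y z w, L x y z w = -L (J x) (J y) z w)
    (hBianchi : ∀ x y z w, L x y z w + L y z x w + L z x y w = 0) (x y z w : V) :
    L (J x) y z w = L x y (J z) w := by
  have swap (a b c : V) : L (J a) b c w = L a (J b) c w := by
    simpa using apply_J_first_eq_neg_mul_apply_J_second J L (-1) hJ (by simpa using hK) a b c w
  have swap_both (a b c : V) : L (J a) (J b) c w = -L a b c w := by
    rw [hK a b c w, neg_neg]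
  have e1 := hBianchi (J x) y z w
  have e2 := hBianchi x (J y) z w
  have e3 := hBianchi x y (J z) w
  have e4 := hBianchi (J x) (J y) (J z) w
  rw [← swap z x y] at e1
  rw [← swap x y z] at e2
  rw [← swap y z x] at e3
  rw [swap_both x y (J z), swap_both y z (J x), swap_both z x (J y)] at e4
  -- `e4` says the three terms with `J` in the third slot sum to zero; then `e1 + e2 + e3` says
  -- the same of the three terms with `J` in the first slot, and `e3` pairs them off.
  linear_combination (e1 + e2 - e3 + e4) / 2

theorem eq_zero_of_apply_J_first_eq_neg_apply_J_third [CharZero K] (hJ : ∀ v, J (J v) = -v)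
    (hAnti : ∀ x y z w, L x y z w = -L y x z w)
    (hK : ∀ x y z w, L x y z w = L (J x) (J y) z w)
    (hJ13 : ∀ x y z w, L (J x) y z w = -L x y (J z) w) (x y z w : V) :
    L x y z w = 0 := by
  have hJJ (a b : V) : L (J a) b (J z) w = L a b z w := by
    rw [hJ13, hJ]
    simp
  have hsymm : L x y z w = L y x z w := by
    calc L x y z w = L (J x) y (J z) w := (hJJ x y).symm
      _ = -L x (J y) (J z) w := by
        simpa using
          apply_J_first_eq_neg_mul_apply_J_second J L 1 hJ (by simpa using hK) x y (J z) w
      _ = L (J y) x (J z) w := by rw [hAnti x]; ring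
      _ = L y x z w := hJJ y x
  linear_combination (hsymm + hAnti x y z w) / 2

end KaehlerLike

theorem stmt_4_general (V : Type*) [AddCommGroup V] [Module ℝ V]
    (J1 J2 J3 : V →ₗ[ℝ] V)
    (L : V →ₗ[ℝ] V →ₗ[ℝ] V →ₗ[ℝ] V →ₗ[ℝ] ℝ)
    (h1sq : ∀ v, J1 (J1 v) = -v) (h2sq : ∀ v, J2 (J2 v) = -v) (h3sq : ∀ v, J3 (J3 v) = -v)
    (h23 : ∀ v, J2 (J3 v) = J1 v) (h32 : ∀ v, J3 (J2 v) = -J1 v)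
    (ha1 : ∀ x y z w, L x y z w = -L y x z w)
    (hBianchi : ∀ x y z w, L x y z w + L y z x w + L z x y w = 0)
    (hK1b : ∀ x y z w, L x y z w = L (J1 x) (J1 y) z w)
    (hK2b : ∀ x y z w, L x y z w = -L (J2 x) (J2 y) z w)
    (hK3b : ∀ x y z w, L x y z w = -L (J3 x) (J3 y) z w) :
    ∀ x y z w, L x y z w = 0 := by
  have hJ2 := KaehlerLike.apply_J_first_eq_apply_J_third J2 L h2sq hK2b hBianchi
  have hJ3 := KaehlerLike.apply_J_first_eq_apply_J_third J3 L h3sq hK3b hBianchi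
  have hJ1 (x y z w : V) : L (J1 x) y z w = -L x y (J1 z) w := by
    rw [← h23, hJ2, hJ3, h32, map_neg, LinearMap.neg_apply]
  exact KaehlerLike.eq_zero_of_apply_J_first_eq_neg_apply_J_third J1 L h1sq ha1 hK1b hJ1

theorem stmt_4 (V : Type*) [AddCommGroup V] [Module ℝ V]
    (J1 J2 J3 : V →ₗ[ℝ] V)
    (L : V →ₗ[ℝ] V →ₗ[ℝ] V →ₗ[ℝ] V →ₗ[ℝ] ℝ)
    (h1sq : ∀ v, J1 (J1 v) = -v) (h2sq : ∀ v, J2 (J2 v) = -v) (h3sq : ∀ v, J3 (J3 v) = -v)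
    (h23 : ∀ v, J2 (J3 v) = J1 v) (h32 : ∀ v, J3 (J2 v) = -J1 v)
    (h31 : ∀ v, J3 (J1 v) = J2 v) (h13 : ∀ v, J1 (J3 v) = -J2 v)
    (h12 : ∀ v, J1 (J2 v) = J3 v) (h21 : ∀ v, J2 (J1 v) = -J3 v)
    (ha1 : ∀ x y z w, L x y z w = -L y x z w)
    (ha2 : ∀ x y z w, L x y z w = -L x y w z)
    (hBianchi : ∀ x y z w, L x y z w + L y z x w + L z x y w = 0)
    (hK1a : ∀ x y z w, L x y z w = L x y (J1 z) (J1 w))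
    (hK1b : ∀ x y z w, L x y z w = L (J1 x) (J1 y) z w)
    (hK2a : ∀ x y z w, L x y z w = -L x y (J2 z) (J2 w))
    (hK2b : ∀ x y z w, L x y z w = -L (J2 x) (J2 y) z w)
    (hK3a : ∀ x y z w, L x y z w = -L x y (J3 z) (J3 w))
    (hK3b : ∀ x y z w, L x y z w = -L (J3 x) (J3 y) z w) :
    ∀ x y z w, L x y z w = 0 :=
  stmt_4_general V J1 J2 J3 L h1sq h2sq h3sq h23 h32 ha1 hBianchi hK1b hK2b hK3b
end

section
/- Let Q(y,z) = ¼ Σ_{α=1}^{3} (∇_y Jα)(Jα z) on an almost (H,G)-manifold, and suppose the corresponding (0,3)-tensor satisfies Q(x,y,z) = ¼ Σα Fα(x, Jα y, z) where Fα(x,y,z) = g((∇_x Jα)y, z). Then the structure tensors can be recovered from Q by Fα(x,y,z) = -Q(x, Jα y, z) - εα Q(x, y, Jα z) for each α, where ε₁=1, ε₂=ε₃=-1, and consequently Q satisfies Q(x,y,z) + Σ_{α=1}^{3} εα Q(x, Jα y, Jα z) = 0. -/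
/-!
Substituting the definition of `Q` into `-Q(x, Jα y, z) - εα Q(x, y, Jα z)` and simplifying
the products `Jβ Jα` leaves `½ Fα(x, y, z)` plus four terms in `Fβ`, `Fγ`. Two applications of
the cyclic relations, each combined with the identities `Fβ(x, y, z) = -εβ Fβ(x, Jβ y, Jβ z)`,
show that these four terms contribute another `½ Fα(x, y, z)`. Evaluating the three recovery
formulas at `Jα y` and summing gives back `4 Q(x, y, z)`, which is the final identity.
-/

namespace AlmostHG

variable {V : Type*} [AddCommGroup V] [Module ℝ V] {J1 J2 J3 : V →ₗ[ℝ] V}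
  {F1 F2 F3 : V →ₗ[ℝ] V →ₗ[ℝ] V →ₗ[ℝ] ℝ}

noncomputable def potential (J1 J2 J3 : V →ₗ[ℝ] V) (F1 F2 F3 : V →ₗ[ℝ] V →ₗ[ℝ] V →ₗ[ℝ] ℝ)
    (x y z : V) : ℝ :=
  (1/4) * (F1 x (J1 y) z + F2 x (J2 y) z + F3 x (J3 y) z)

theorem potential_neg_middle (x y z : V) :
    potential J1 J2 J3 F1 F2 F3 x (-y) z = -potential J1 J2 J3 F1 F2 F3 x y z := by
  simp only [potential, map_neg, LinearMap.neg_apply]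
  ring

theorem F1_eq_potential (h1sq : ∀ v, J1 (J1 v) = -v) (h2sq : ∀ v, J2 (J2 v) = -v)
    (h3sq : ∀ v, J3 (J3 v) = -v) (h31 : ∀ v, J3 (J1 v) = J2 v) (h21 : ∀ v, J2 (J1 v) = -J3 v)
    (hF1b : ∀ x y z, F1 x y z = -F1 x (J1 y) (J1 z))
    (hF2b : ∀ x y z, F2 x y z = F2 x (J2 y) (J2 z))
    (hF3b : ∀ x y z, F3 x y z = F3 x (J3 y) (J3 z))
    (hF123 : ∀ x y z, F1 x y z = F2 x (J3 y) z + F3 x y (J2 z))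
    (hF231 : ∀ x y z, F2 x y z = F3 x (J1 y) z + F1 x y (J3 z)) (x y z : V) :
    F1 x y z =
      -potential J1 J2 J3 F1 F2 F3 x (J1 y) z - potential J1 J2 J3 F1 F2 F3 x y (J1 z) := by
  have hJ3 : F2 x (J3 y) z - F3 x (J3 y) (J1 z) = F1 x y z := by
    have h := hF3b x (J3 y) (J1 z)
    simp only [h3sq, h31, map_neg, LinearMap.neg_apply] at h
    linarith [hF123 x y z]
  have hJ2 : -F2 x (J2 y) (J1 z) - F3 x (J2 y) z = F1 x y z := by
    have h2 := hF2b x (J2 y) (J1 z)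
    have h3 := hF3b x (J1 y) (J3 z)
    have h231 := hF231 x y (J3 z)
    simp only [h2sq, h3sq, h21, h31, map_neg, LinearMap.neg_apply, neg_neg] at h2 h3 h231
    linarith
  simp only [potential, h1sq, h21, h31, map_neg, LinearMap.neg_apply]
  linarith [hF1b x y z]

theorem F2_eq_potential (h1sq : ∀ v, J1 (J1 v) = -v) (h2sq : ∀ v, J2 (J2 v) = -v)
    (h3sq : ∀ v, J3 (J3 v) = -v) (h12 : ∀ v, J1 (J2 v) = J3 v) (h32 : ∀ v, J3 (J2 v) = -J1 v)
    (hF1b : ∀ x y z, F1 x y z = -F1 x (J1 y) (J1 z))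
    (hF2b : ∀ x y z, F2 x y z = F2 x (J2 y) (J2 z))
    (hF3b : ∀ x y z, F3 x y z = F3 x (J3 y) (J3 z))
    (hF231 : ∀ x y z, F2 x y z = F3 x (J1 y) z + F1 x y (J3 z))
    (hF312 : ∀ x y z, F3 x y z = F1 x (J2 y) z - F2 x y (J1 z)) (x y z : V) :
    F2 x y z =
      -potential J1 J2 J3 F1 F2 F3 x (J2 y) z + potential J1 J2 J3 F1 F2 F3 x y (J2 z) := by
  have hJ1 : F3 x (J1 y) z + F1 x (J1 y) (J2 z) = F2 x y z := by
    have h := hF1b x (J1 y) (J2 z)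
    simp only [h1sq, h12, map_neg, LinearMap.neg_apply, neg_neg] at h
    linarith [hF231 x y z]
  have hJ3 : -F1 x (J3 y) z + F3 x (J3 y) (J2 z) = F2 x y z := by
    have h3 := hF3b x (J3 y) (J2 z)
    have h1 := hF1b x (J2 y) (J1 z)
    have h312 := hF312 x y (J1 z)
    simp only [h1sq, h3sq, h12, h32, map_neg, LinearMap.neg_apply, neg_neg] at h3 h1 h312
    linarith
  simp only [potential, h2sq, h12, h32, map_neg, LinearMap.neg_apply]
  linarith [hF2b x y z]

theorem F3_eq_potential (h1sq : ∀ v, J1 (J1 v) = -v) (h2sq : ∀ v, J2 (J2 v) = -v)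
    (h3sq : ∀ v, J3 (J3 v) = -v) (h23 : ∀ v, J2 (J3 v) = J1 v) (h13 : ∀ v, J1 (J3 v) = -J2 v)
    (hF1b : ∀ x y z, F1 x y z = -F1 x (J1 y) (J1 z))
    (hF2b : ∀ x y z, F2 x y z = F2 x (J2 y) (J2 z))
    (hF3b : ∀ x y z, F3 x y z = F3 x (J3 y) (J3 z))
    (hF312 : ∀ x y z, F3 x y z = F1 x (J2 y) z - F2 x y (J1 z))
    (hF123 : ∀ x y z, F1 x y z = F2 x (J3 y) z + F3 x y (J2 z)) (x y z : V) :
    F3 x y z =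
      -potential J1 J2 J3 F1 F2 F3 x (J3 y) z + potential J1 J2 J3 F1 F2 F3 x y (J3 z) := by
  have hJ2 : F1 x (J2 y) z + F2 x (J2 y) (J3 z) = F3 x y z := by
    have h := hF2b x (J2 y) (J3 z)
    simp only [h2sq, h23, map_neg, LinearMap.neg_apply] at h
    linarith [hF312 x y z]
  have hJ1 : -F2 x (J1 y) z + F1 x (J1 y) (J3 z) = F3 x y z := by
    have h1 := hF1b x (J1 y) (J3 z)
    have h2 := hF2b x (J3 y) (J2 z)
    have h123 := hF123 x y (J2 z)
    simp only [h1sq, h2sq, h13, h23, map_neg, LinearMap.neg_apply, neg_neg] at h1 h2 h123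
    linarith
  simp only [potential, h3sq, h13, h23, map_neg, LinearMap.neg_apply]
  linarith [hF3b x y z]

theorem potential_add_sum_eps_eq_zero (h1sq : ∀ v, J1 (J1 v) = -v) (h2sq : ∀ v, J2 (J2 v) = -v)
    (h3sq : ∀ v, J3 (J3 v) = -v)
    (hF1 : ∀ x y z, F1 x y z =
      -potential J1 J2 J3 F1 F2 F3 x (J1 y) z - potential J1 J2 J3 F1 F2 F3 x y (J1 z))
    (hF2 : ∀ x y z, F2 x y z =
      -potential J1 J2 J3 F1 F2 F3 x (J2 y) z + potential J1 J2 J3 F1 F2 F3 x y (J2 z))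
    (hF3 : ∀ x y z, F3 x y z =
      -potential J1 J2 J3 F1 F2 F3 x (J3 y) z + potential J1 J2 J3 F1 F2 F3 x y (J3 z))
    (x y z : V) :
    potential J1 J2 J3 F1 F2 F3 x y z + potential J1 J2 J3 F1 F2 F3 x (J1 y) (J1 z)
      - potential J1 J2 J3 F1 F2 F3 x (J2 y) (J2 z)
      - potential J1 J2 J3 F1 F2 F3 x (J3 y) (J3 z) = 0 := by
  have h1 := hF1 x (J1 y) z
  have h2 := hF2 x (J2 y) z
  have h3 := hF3 x (J3 y) z
  simp only [h1sq, h2sq, h3sq, potential_neg_middle] at h1 h2 h3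
  have hdef : potential J1 J2 J3 F1 F2 F3 x y z =
      (1/4) * (F1 x (J1 y) z + F2 x (J2 y) z + F3 x (J3 y) z) := rfl
  linarith

end AlmostHG

theorem stmt_6_general (V : Type*) [AddCommGroup V] [Module ℝ V]
    (J1 J2 J3 : V →ₗ[ℝ] V)
    (F1 F2 F3 : V →ₗ[ℝ] V →ₗ[ℝ] V →ₗ[ℝ] ℝ)
    (h1sq : ∀ v, J1 (J1 v) = -v) (h2sq : ∀ v, J2 (J2 v) = -v) (h3sq : ∀ v, J3 (J3 v) = -v)
    (h23 : ∀ v, J2 (J3 v) = J1 v) (h32 : ∀ v, J3 (J2 v) = -J1 v)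
    (h31 : ∀ v, J3 (J1 v) = J2 v) (h13 : ∀ v, J1 (J3 v) = -J2 v)
    (h12 : ∀ v, J1 (J2 v) = J3 v) (h21 : ∀ v, J2 (J1 v) = -J3 v)
    -- fundamental identities (3.4)
    (hF1b : ∀ x y z, F1 x y z = -F1 x (J1 y) (J1 z))
    (hF2b : ∀ x y z, F2 x y z = F2 x (J2 y) (J2 z))
    (hF3b : ∀ x y z, F3 x y z = F3 x (J3 y) (J3 z))
    -- relations between the three structure tensors (cyclic)
    (hF123 : ∀ x y z, F1 x y z = F2 x (J3 y) z + F3 x y (J2 z))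
    (hF231 : ∀ x y z, F2 x y z = F3 x (J1 y) z + F1 x y (J3 z))
    (hF312 : ∀ x y z, F3 x y z = F1 x (J2 y) z - F2 x y (J1 z))
    -- the potential Q of the natural connection D
    (Q : V → V → V → ℝ)
    (hQ : ∀ x y z, Q x y z = (1/4) * (F1 x (J1 y) z + F2 x (J2 y) z + F3 x (J3 y) z)) :
    (∀ x y z, F1 x y z = -Q x (J1 y) z - Q x y (J1 z)) ∧
    (∀ x y z, F2 x y z = -Q x (J2 y) z + Q x y (J2 z)) ∧
    (∀ x y z, F3 x y z = -Q x (J3 y) z + Q x y (J3 z)) ∧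
    (∀ x y z, Q x y z + Q x (J1 y) (J1 z) - Q x (J2 y) (J2 z) - Q x (J3 y) (J3 z) = 0) := by
  obtain rfl : Q = AlmostHG.potential J1 J2 J3 F1 F2 F3 :=
    funext fun x => funext fun y => funext fun z => hQ x y z
  have hF1 := AlmostHG.F1_eq_potential h1sq h2sq h3sq h31 h21 hF1b hF2b hF3b hF123 hF231
  have hF2 := AlmostHG.F2_eq_potential h1sq h2sq h3sq h12 h32 hF1b hF2b hF3b hF231 hF312
  have hF3 := AlmostHG.F3_eq_potential h1sq h2sq h3sq h23 h13 hF1b hF2b hF3b hF312 hF123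
  exact ⟨hF1, hF2, hF3, AlmostHG.potential_add_sum_eps_eq_zero h1sq h2sq h3sq hF1 hF2 hF3⟩

/-- With `Q(x,y,z) = ¼ Σα Fα(x, Jα y, z)` on an almost (H,G)-manifold, the structure
tensors are recovered via `Fα(x,y,z) = -Q(x,Jα y,z) - εα Q(x,y,Jα z)`, and consequently
`Q(x,y,z) + Σα εα Q(x,Jα y,Jα z) = 0`  (ε₁ = 1, ε₂ = ε₃ = -1). -/
theorem stmt_6 (V : Type*) [AddCommGroup V] [Module ℝ V]
    (g : V →ₗ[ℝ] V →ₗ[ℝ] ℝ) (J1 J2 J3 : V →ₗ[ℝ] V)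
    (F1 F2 F3 : V →ₗ[ℝ] V →ₗ[ℝ] V →ₗ[ℝ] ℝ)
    (hsym : ∀ x y, g x y = g y x)
    (h1sq : ∀ v, J1 (J1 v) = -v) (h2sq : ∀ v, J2 (J2 v) = -v) (h3sq : ∀ v, J3 (J3 v) = -v)
    (h23 : ∀ v, J2 (J3 v) = J1 v) (h32 : ∀ v, J3 (J2 v) = -J1 v)
    (h31 : ∀ v, J3 (J1 v) = J2 v) (h13 : ∀ v, J1 (J3 v) = -J2 v)
    (h12 : ∀ v, J1 (J2 v) = J3 v) (h21 : ∀ v, J2 (J1 v) = -J3 v)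
    (hg1 : ∀ x y, g (J1 x) (J1 y) = g x y)
    (hg2 : ∀ x y, g (J2 x) (J2 y) = -g x y)
    (hg3 : ∀ x y, g (J3 x) (J3 y) = -g x y)
    -- fundamental identities (3.4)
    (hF1a : ∀ x y z, F1 x y z = -F1 x z y)
    (hF1b : ∀ x y z, F1 x y z = -F1 x (J1 y) (J1 z))
    (hF1c : ∀ x y z, F1 x (J1 y) z = F1 x y (J1 z))
    (hF2a : ∀ x y z, F2 x y z = F2 x z y)
    (hF2b : ∀ x y z, F2 x y z = F2 x (J2 y) (J2 z))
    (hF2c : ∀ x y z, F2 x (J2 y) z = -F2 x y (J2 z))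
    (hF3a : ∀ x y z, F3 x y z = F3 x z y)
    (hF3b : ∀ x y z, F3 x y z = F3 x (J3 y) (J3 z))
    (hF3c : ∀ x y z, F3 x (J3 y) z = -F3 x y (J3 z))
    -- relations between the three structure tensors (cyclic)
    (hF123 : ∀ x y z, F1 x y z = F2 x (J3 y) z + F3 x y (J2 z))
    (hF231 : ∀ x y z, F2 x y z = F3 x (J1 y) z + F1 x y (J3 z))
    (hF312 : ∀ x y z, F3 x y z = F1 x (J2 y) z - F2 x y (J1 z))
    -- the potential Q of the natural connection D
    (Q : V → V → V → ℝ)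
    (hQ : ∀ x y z, Q x y z = (1/4) * (F1 x (J1 y) z + F2 x (J2 y) z + F3 x (J3 y) z)) :
    (∀ x y z, F1 x y z = -Q x (J1 y) z - Q x y (J1 z)) ∧
    (∀ x y z, F2 x y z = -Q x (J2 y) z + Q x y (J2 z)) ∧
    (∀ x y z, F3 x y z = -Q x (J3 y) z + Q x y (J3 z)) ∧
    (∀ x y z, Q x y z + Q x (J1 y) (J1 z) - Q x (J2 y) (J2 z) - Q x (J3 y) (J3 z) = 0) :=
  stmt_6_general V J1 J2 J3 F1 F2 F3 h1sq h2sq h3sq h23 h32 h31 h13 h12 h21 hF1b hF2b hF3b hF123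
    hF231 hF312 Q hQ
end

section
/- On a W-manifold (locally conformal pseudo-hyper-Kähler manifold), with the structure tensors given by Fα(x,y,z) = (1/4n){εα g(x,y)θ(Jα z) - g(x,z)θ(Jα y) - εα g(Jα x, y)θ(z) + g(Jα x, z)θ(y)}, the torsion T(x,y,z) = Q(x,y,z) - Q(y,x,z) of the natural connection D (where Q(x,y,z) = ¼Σα Fα(x,Jα y,z)) satisfies T(x, y, Ω) = 0 for all x, y, where Ω is the Lee vector defined by θ = g(·, Ω). -/
/-!
Each summand `F_α(x, J_α y, Ω)` of `4 Q(x, y, Ω)` is already symmetric in `x` and `y`. With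
`J² = -1` and `g(J ·, J ·) = ε g` it becomes
`c (ε g(x, J y) θ(J Ω) + θ x θ y - ε² g(x, y) θ Ω + θ(J x) θ(J y))`, and the first term is symmetric
too: `g(x, J y) = -ε g(y, J x)`, while `(1 + ε) θ(J Ω) = 0`. Hence `T(x, y, Ω)` vanishes.
-/

section Compatible

variable {V : Type*} [AddCommGroup V] [Module ℝ V]
  {g : V →ₗ[ℝ] V →ₗ[ℝ] ℝ} {J : V →ₗ[ℝ] V} {ε : ℝ}

lemma apply_left_eq_neg_mul_apply_right (hJsq : ∀ v, J (J v) = -v)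
    (hgJ : ∀ x y, g (J x) (J y) = ε * g x y) (x y : V) :
    g (J x) y = -ε * g x (J y) := by
  have h := hgJ x (J y)
  rw [hJsq, map_neg] at h
  linarith

lemma structureTensor_apply_lee_comm (hsym : ∀ x y, g x y = g y x)
    (hJsq : ∀ v, J (J v) = -v) (hgJ : ∀ x y, g (J x) (J y) = ε * g x y)
    {θ : V → ℝ} {Ω : V} (hθ : ∀ x, θ x = g x Ω) {c : ℝ} {F : V → V → V → ℝ}
    (hF : ∀ x y z, F x y z =
      c * (ε * g x y * θ (J z) - g x z * θ (J y) - ε * g (J x) y * θ z + g (J x) z * θ y))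
    (x y : V) :
    F x (J y) Ω = F y (J x) Ω := by
  have hskew := apply_left_eq_neg_mul_apply_right hJsq hgJ
  have hlee : (1 + ε) * g (J Ω) Ω = 0 := by
    linear_combination hskew Ω Ω - ε * hsym Ω (J Ω)
  have hmixed : g x (J y) = -ε * g y (J x) := by
    rw [hsym, hskew]
  simp only [hF, hθ, hJsq, hgJ, map_neg, LinearMap.neg_apply]
  linear_combination c * (ε * g (J Ω) Ω * hmixed - ε * g y (J x) * hlee
    - ε * ε * g Ω Ω * hsym x y)

end Compatible

theorem stmt_7_general (V : Type*) [AddCommGroup V] [Module ℝ V]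
    (n : ℕ) (g : V →ₗ[ℝ] V →ₗ[ℝ] ℝ) (J1 J2 J3 : V →ₗ[ℝ] V)
    (θ : V → ℝ) (Ω : V) (hθ : ∀ x, θ x = g x Ω)
    (F1 F2 F3 : V → V → V → ℝ)
    (hsym : ∀ x y, g x y = g y x)
    (h1sq : ∀ v, J1 (J1 v) = -v) (h2sq : ∀ v, J2 (J2 v) = -v) (h3sq : ∀ v, J3 (J3 v) = -v)
    (hg1 : ∀ x y, g (J1 x) (J1 y) = g x y)
    (hg2 : ∀ x y, g (J2 x) (J2 y) = -g x y)
    (hg3 : ∀ x y, g (J3 x) (J3 y) = -g x y)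
    -- the W-class form of the structure tensors (ε₁ = 1, ε₂ = ε₃ = -1)
    (hF1 : ∀ x y z, F1 x y z = (1 / (4 * (n : ℝ))) *
      (g x y * θ (J1 z) - g x z * θ (J1 y) - g (J1 x) y * θ z + g (J1 x) z * θ y))
    (hF2 : ∀ x y z, F2 x y z = (1 / (4 * (n : ℝ))) *
      (-(g x y * θ (J2 z)) - g x z * θ (J2 y) + g (J2 x) y * θ z + g (J2 x) z * θ y))
    (hF3 : ∀ x y z, F3 x y z = (1 / (4 * (n : ℝ))) *
      (-(g x y * θ (J3 z)) - g x z * θ (J3 y) + g (J3 x) y * θ z + g (J3 x) z * θ y))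
    (Q T : V → V → V → ℝ)
    (hQ : ∀ x y z, Q x y z = (1/4) * (F1 x (J1 y) z + F2 x (J2 y) z + F3 x (J3 y) z))
    (hT : ∀ x y z, T x y z = Q x y z - Q y x z) :
    ∀ x y, T x y Ω = 0 := by
  intro x y
  have comm1 := structureTensor_apply_lee_comm (F := F1) (c := 1 / (4 * n)) (ε := 1)
    hsym h1sq (fun x y => by rw [hg1, one_mul]) hθ (fun x y z => by rw [hF1]; ring) x y
  have comm2 := structureTensor_apply_lee_comm (F := F2) (c := 1 / (4 * n)) (ε := -1)
    hsym h2sq (fun x y => by rw [hg2, neg_one_mul]) hθ (fun x y z => by rw [hF2]; ring) x y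
  have comm3 := structureTensor_apply_lee_comm (F := F3) (c := 1 / (4 * n)) (ε := -1)
    hsym h3sq (fun x y => by rw [hg3, neg_one_mul]) hθ (fun x y z => by rw [hF3]; ring) x y
  rw [hT, hQ, hQ, comm1, comm2, comm3, sub_self]

/-- On a W-manifold the torsion of the natural connection D annihilates the Lee vector:
T(x,y,Ω) = 0. -/
theorem stmt_7 (V : Type*) [AddCommGroup V] [Module ℝ V]
    (n : ℕ) (hn : 0 < n) [FiniteDimensional ℝ V] (hdim : Module.finrank ℝ V = 4 * n)
    (g : V →ₗ[ℝ] V →ₗ[ℝ] ℝ) (J1 J2 J3 : V →ₗ[ℝ] V)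
    (θ : V → ℝ) (Ω : V) (hθ : ∀ x, θ x = g x Ω)
    (F1 F2 F3 : V → V → V → ℝ)
    (hsym : ∀ x y, g x y = g y x)
    (h1sq : ∀ v, J1 (J1 v) = -v) (h2sq : ∀ v, J2 (J2 v) = -v) (h3sq : ∀ v, J3 (J3 v) = -v)
    (h23 : ∀ v, J2 (J3 v) = J1 v) (h32 : ∀ v, J3 (J2 v) = -J1 v)
    (h31 : ∀ v, J3 (J1 v) = J2 v) (h13 : ∀ v, J1 (J3 v) = -J2 v)
    (h12 : ∀ v, J1 (J2 v) = J3 v) (h21 : ∀ v, J2 (J1 v) = -J3 v)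
    (hg1 : ∀ x y, g (J1 x) (J1 y) = g x y)
    (hg2 : ∀ x y, g (J2 x) (J2 y) = -g x y)
    (hg3 : ∀ x y, g (J3 x) (J3 y) = -g x y)
    -- the W-class form of the structure tensors (ε₁ = 1, ε₂ = ε₃ = -1)
    (hF1 : ∀ x y z, F1 x y z = (1 / (4 * (n : ℝ))) *
      (g x y * θ (J1 z) - g x z * θ (J1 y) - g (J1 x) y * θ z + g (J1 x) z * θ y))
    (hF2 : ∀ x y z, F2 x y z = (1 / (4 * (n : ℝ))) *
      (-(g x y * θ (J2 z)) - g x z * θ (J2 y) + g (J2 x) y * θ z + g (J2 x) z * θ y))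
    (hF3 : ∀ x y z, F3 x y z = (1 / (4 * (n : ℝ))) *
      (-(g x y * θ (J3 z)) - g x z * θ (J3 y) + g (J3 x) y * θ z + g (J3 x) z * θ y))
    (Q T : V → V → V → ℝ)
    (hQ : ∀ x y z, Q x y z = (1/4) * (F1 x (J1 y) z + F2 x (J2 y) z + F3 x (J3 y) z))
    (hT : ∀ x y z, T x y z = Q x y z - Q y x z) :
    ∀ x y, T x y Ω = 0 :=
  stmt_7_general V n g J1 J2 J3 θ Ω hθ F1 F2 F3 hsym h1sq h2sq h3sq hg1 hg2 hg3 hF1 hF2 hF3 Q T hQ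
    hT
end

section
/- On a W-manifold, the torsion tensor of the natural connection D has the explicit form T(x,y,z) = (1/16n){ -2g₁(x,y)θ(J₁z) + 3g(x,z)θ(y) - 3g(y,z)θ(x) + Σ_{α=1}^{3}[gα(x,z)θ(Jα y) - gα(y,z)θ(Jα x)] }, where gα(x,y) = g(Jα x, y), given that T(x,y,z) = Q(x,y,z) - Q(y,x,z) with Q(x,y,z) = ¼ Σα Fα(x, Jα y, z) and Fα given by the W-class formula. -/
/-!
Each summand of `Q` collapses to the same expression whatever the sign `εα`: writing
`gα(x, y) = g(Jα x, y)`, one has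
`4n·Fα(x, Jα y, z) = g(x,z)θ(y) - g(x,y)θ(z) + gα(x,z)θ(Jα y) - gα(x,y)θ(Jα z)`,
because `g(x, Jα y) = -εα gα(x, y)` exactly compensates the sign `εα` in the W-class formula.
In the antisymmetrisation `T(x,y,z) = Q(x,y,z) - Q(y,x,z)` the symmetric terms `g(x,y)` cancel,
and so do the symmetric forms `g₂, g₃`, while the skew form `g₁` doubles.
-/

section HypercomplexForms

variable {R M : Type*} [CommRing R] [AddCommGroup M] [Module R M]
  (g : M →ₗ[R] M →ₗ[R] R) (J : M →ₗ[R] M) (θ : M → R)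

theorem apply_J_right_of_hermitian (hJ : ∀ v, J (J v) = -v)
    (hg : ∀ x y, g (J x) (J y) = g x y) (x y : M) : g x (J y) = -g (J x) y := by
  have h := hg x (J y)
  rw [hJ, map_neg] at h
  exact h.symm

theorem apply_J_right_of_antiHermitian (hJ : ∀ v, J (J v) = -v)
    (hg : ∀ x y, g (J x) (J y) = -g x y) (x y : M) : g x (J y) = g (J x) y := by
  have h := hg x (J y)
  rw [hJ, map_neg] at h
  exact (neg_inj.mp h).symm

/-- `4n·Fα(x, Jα y, z)` for a W-class structure tensor `Fα`. -/
def wClassSummand (x y z : M) : R :=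
  g x z * θ y - g x y * θ z + g (J x) z * θ (J y) - g (J x) y * θ (J z)

variable {g J θ}

theorem wClassSummand_of_hermitian (hJ : ∀ v, J (J v) = -v)
    (hg : ∀ x y, g (J x) (J y) = g x y) (hθ : ∀ v, θ (-v) = -θ v) (x y z : M) :
    g x (J y) * θ (J z) - g x z * θ (J (J y)) - g (J x) (J y) * θ z + g (J x) z * θ (J y) =
      wClassSummand g J θ x y z := by
  rw [apply_J_right_of_hermitian g J hJ hg, hJ, hθ, hg, wClassSummand]
  ring

theorem wClassSummand_of_antiHermitian (hJ : ∀ v, J (J v) = -v)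
    (hg : ∀ x y, g (J x) (J y) = -g x y) (hθ : ∀ v, θ (-v) = -θ v) (x y z : M) :
    -(g x (J y) * θ (J z)) - g x z * θ (J (J y)) + g (J x) (J y) * θ z + g (J x) z * θ (J y) =
      wClassSummand g J θ x y z := by
  rw [apply_J_right_of_antiHermitian g J hJ hg, hJ, hθ, hg, wClassSummand]
  ring

theorem wClassSummand_sub_swap_of_hermitian (hsym : ∀ x y, g x y = g y x)
    (hJ : ∀ v, J (J v) = -v) (hg : ∀ x y, g (J x) (J y) = g x y) (x y z : M) :
    wClassSummand g J θ x y z - wClassSummand g J θ y x z =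
      g x z * θ y - g y z * θ x + g (J x) z * θ (J y) - g (J y) z * θ (J x)
        - 2 * g (J x) y * θ (J z) := by
  have hskew : g (J y) x = -g (J x) y := by rw [hsym, apply_J_right_of_hermitian g J hJ hg]
  rw [wClassSummand, wClassSummand, hskew, hsym y x]
  ring

theorem wClassSummand_sub_swap_of_antiHermitian (hsym : ∀ x y, g x y = g y x)
    (hJ : ∀ v, J (J v) = -v) (hg : ∀ x y, g (J x) (J y) = -g x y) (x y z : M) :
    wClassSummand g J θ x y z - wClassSummand g J θ y x z =
      g x z * θ y - g y z * θ x + g (J x) z * θ (J y) - g (J y) z * θ (J x) := by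
  have hsymJ : g (J y) x = g (J x) y := by rw [hsym, apply_J_right_of_antiHermitian g J hJ hg]
  rw [wClassSummand, wClassSummand, hsymJ, hsym y x]
  ring

end HypercomplexForms

theorem stmt_8_general (V : Type*) [AddCommGroup V] [Module ℝ V]
    (n : ℕ)
    (g : V →ₗ[ℝ] V →ₗ[ℝ] ℝ) (J1 J2 J3 : V →ₗ[ℝ] V)
    (θ : V → ℝ) (Ω : V) (hθ : ∀ x, θ x = g x Ω)
    (F1 F2 F3 : V → V → V → ℝ)
    (hsym : ∀ x y, g x y = g y x)
    (h1sq : ∀ v, J1 (J1 v) = -v) (h2sq : ∀ v, J2 (J2 v) = -v) (h3sq : ∀ v, J3 (J3 v) = -v)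
    (hg1 : ∀ x y, g (J1 x) (J1 y) = g x y)
    (hg2 : ∀ x y, g (J2 x) (J2 y) = -g x y)
    (hg3 : ∀ x y, g (J3 x) (J3 y) = -g x y)
    -- the W-class form of the structure tensors (ε₁ = 1, ε₂ = ε₃ = -1)
    (hF1 : ∀ x y z, F1 x y z = (1 / (4 * (n : ℝ))) *
      (g x y * θ (J1 z) - g x z * θ (J1 y) - g (J1 x) y * θ z + g (J1 x) z * θ y))
    (hF2 : ∀ x y z, F2 x y z = (1 / (4 * (n : ℝ))) *
      (-(g x y * θ (J2 z)) - g x z * θ (J2 y) + g (J2 x) y * θ z + g (J2 x) z * θ y))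
    (hF3 : ∀ x y z, F3 x y z = (1 / (4 * (n : ℝ))) *
      (-(g x y * θ (J3 z)) - g x z * θ (J3 y) + g (J3 x) y * θ z + g (J3 x) z * θ y))
    (Q T : V → V → V → ℝ)
    (hQ : ∀ x y z, Q x y z = (1/4) * (F1 x (J1 y) z + F2 x (J2 y) z + F3 x (J3 y) z))
    (hT : ∀ x y z, T x y z = Q x y z - Q y x z) :
    ∀ x y z, T x y z = (1 / (16 * (n : ℝ))) *
      (-(2 * g (J1 x) y * θ (J1 z)) + 3 * g x z * θ y - 3 * g y z * θ x
        + g (J1 x) z * θ (J1 y) + g (J2 x) z * θ (J2 y) + g (J3 x) z * θ (J3 y)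
        - g (J1 y) z * θ (J1 x) - g (J2 y) z * θ (J2 x) - g (J3 y) z * θ (J3 x)) := by
  intro x y z
  have hθneg : ∀ v, θ (-v) = -θ v := by simp [hθ]
  have hQ' : ∀ x y, Q x y z = (1 / (16 * (n : ℝ))) * (wClassSummand g J1 θ x y z +
      wClassSummand g J2 θ x y z + wClassSummand g J3 θ x y z) := by
    intro x y
    rw [hQ, hF1, hF2, hF3, wClassSummand_of_hermitian h1sq hg1 hθneg,
      wClassSummand_of_antiHermitian h2sq hg2 hθneg, wClassSummand_of_antiHermitian h3sq hg3 hθneg]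
    ring
  have h1 := wClassSummand_sub_swap_of_hermitian (θ := θ) hsym h1sq hg1 x y z
  have h2 := wClassSummand_sub_swap_of_antiHermitian (θ := θ) hsym h2sq hg2 x y z
  have h3 := wClassSummand_sub_swap_of_antiHermitian (θ := θ) hsym h3sq hg3 x y z
  rw [hT, hQ', hQ']
  linear_combination (1 / (16 * (n : ℝ))) * (h1 + h2 + h3)

/-- On a W-manifold the torsion of the natural connection D has the explicit form (3.14). -/
theorem stmt_8 (V : Type*) [AddCommGroup V] [Module ℝ V]
    (n : ℕ) (hn : 0 < n) [FiniteDimensional ℝ V] (hdim : Module.finrank ℝ V = 4 * n)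
    (g : V →ₗ[ℝ] V →ₗ[ℝ] ℝ) (J1 J2 J3 : V →ₗ[ℝ] V)
    (θ : V → ℝ) (Ω : V) (hθ : ∀ x, θ x = g x Ω)
    (F1 F2 F3 : V → V → V → ℝ)
    (hsym : ∀ x y, g x y = g y x)
    (h1sq : ∀ v, J1 (J1 v) = -v) (h2sq : ∀ v, J2 (J2 v) = -v) (h3sq : ∀ v, J3 (J3 v) = -v)
    (h23 : ∀ v, J2 (J3 v) = J1 v) (h32 : ∀ v, J3 (J2 v) = -J1 v)
    (h31 : ∀ v, J3 (J1 v) = J2 v) (h13 : ∀ v, J1 (J3 v) = -J2 v)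
    (h12 : ∀ v, J1 (J2 v) = J3 v) (h21 : ∀ v, J2 (J1 v) = -J3 v)
    (hg1 : ∀ x y, g (J1 x) (J1 y) = g x y)
    (hg2 : ∀ x y, g (J2 x) (J2 y) = -g x y)
    (hg3 : ∀ x y, g (J3 x) (J3 y) = -g x y)
    -- the W-class form of the structure tensors (ε₁ = 1, ε₂ = ε₃ = -1)
    (hF1 : ∀ x y z, F1 x y z = (1 / (4 * (n : ℝ))) *
      (g x y * θ (J1 z) - g x z * θ (J1 y) - g (J1 x) y * θ z + g (J1 x) z * θ y))
    (hF2 : ∀ x y z, F2 x y z = (1 / (4 * (n : ℝ))) *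
      (-(g x y * θ (J2 z)) - g x z * θ (J2 y) + g (J2 x) y * θ z + g (J2 x) z * θ y))
    (hF3 : ∀ x y z, F3 x y z = (1 / (4 * (n : ℝ))) *
      (-(g x y * θ (J3 z)) - g x z * θ (J3 y) + g (J3 x) y * θ z + g (J3 x) z * θ y))
    (Q T : V → V → V → ℝ)
    (hQ : ∀ x y z, Q x y z = (1/4) * (F1 x (J1 y) z + F2 x (J2 y) z + F3 x (J3 y) z))
    (hT : ∀ x y z, T x y z = Q x y z - Q y x z) :
    ∀ x y z, T x y z = (1 / (16 * (n : ℝ))) *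
      (-(2 * g (J1 x) y * θ (J1 z)) + 3 * g x z * θ y - 3 * g y z * θ x
        + g (J1 x) z * θ (J1 y) + g (J2 x) z * θ (J2 y) + g (J3 x) z * θ (J3 y)
        - g (J1 y) z * θ (J1 x) - g (J2 y) z * θ (J2 x) - g (J3 y) z * θ (J3 x)) :=
  stmt_8_general V n g J1 J2 J3 θ Ω hθ F1 F2 F3 hsym h1sq h2sq h3sq hg1 hg2 hg3 hF1 hF2 hF3 Q T hQ
    hT
end

section
/- On a W-manifold, the square norms of ∇Jα are proportional to the square of the Lee vector: ‖∇Jα‖² = ((4n-1)εα - 1)/(4n²) · θ(Ω), for α = 1,2,3, where ‖∇Jα‖² = g^{ij} g^{kl} g((∇_i Jα)e_k, (∇_j Jα)e_l) is computed from the W-class formula for Fα. -/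
/-!
Write `F = c · T` with `T` the bracket of the W-class formula. In its last slot,
`T(x, y, ·) = g(·, U(x, y))` where `U(x, y) = ∑ₘ g(y, sₘ) vₘ` has four rank-one terms.
Contracting the last pair of indices gives `g(U(x, y), U(x', y'))` by the reproducing formula
`v = ∑ g^{kl} g(eₖ, v) eₗ`; contracting the middle pair turns this into the bilinear form
`4ε (θ(Ω) g(x, x') - θ(x) θ(x') + g(JΩ, Ω) g(x, J x') - g(x, JΩ) g(x', JΩ))`, whose trace is
`4ε (4n θ(Ω) - θ(Ω) - ε θ(Ω))` because `tr J_α = 0`, as `J_α = J_β J_γ = -J_γ J_β`.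
-/

open Finset

section Contract

variable {X ι : Type*} [Fintype ι] (G : ι → ι → ℝ) (e : ι → X)

def contract (B : X → X → ℝ) : ℝ :=
  ∑ i, ∑ j, G i j * B (e i) (e j)

theorem contract_add (B B' : X → X → ℝ) :
    contract G e (fun a b => B a b + B' a b) = contract G e B + contract G e B' := by
  simp only [contract, mul_add, sum_add_distrib]

theorem contract_sub (B B' : X → X → ℝ) :
    contract G e (fun a b => B a b - B' a b) = contract G e B - contract G e B' := by
  simp only [contract, mul_sub, sum_sub_distrib]

theorem contract_neg (B : X → X → ℝ) :
    contract G e (fun a b => -B a b) = -contract G e B := by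
  simp only [contract, mul_neg, sum_neg_distrib]

theorem contract_sum {κ : Type*} (t : Finset κ) (B : κ → X → X → ℝ) :
    contract G e (fun a b => ∑ m ∈ t, B m a b) = ∑ m ∈ t, contract G e (B m) := by
  simp only [contract, mul_sum]
  symm
  rw [sum_comm]
  exact sum_congr rfl fun _ _ => sum_comm

theorem contract_const_mul (c : ℝ) (B : X → X → ℝ) :
    contract G e (fun a b => c * B a b) = c * contract G e B := by
  simp only [contract, mul_sum]
  exact sum_congr rfl fun _ _ => sum_congr rfl fun _ _ => mul_left_comm _ _ _

def sqNorm (T : X → X → X → ℝ) : ℝ :=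
  ∑ i, ∑ j, ∑ k, ∑ l, ∑ p, ∑ q,
    G i j * G k l * G p q * T (e i) (e k) (e p) * T (e j) (e l) (e q)

theorem sqNorm_eq_contract (T : X → X → X → ℝ) :
    sqNorm G e T = contract G e (fun x x' => contract G e (fun y y' =>
      contract G e (fun z z' => T x y z * T x' y' z'))) := by
  simp only [sqNorm, contract, mul_sum]
  exact sum_congr rfl fun _ _ => sum_congr rfl fun _ _ => sum_congr rfl fun _ _ =>
    sum_congr rfl fun _ _ => sum_congr rfl fun _ _ => sum_congr rfl fun _ _ => by ring

theorem sqNorm_const_mul (c : ℝ) (T : X → X → X → ℝ) :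
    sqNorm G e (fun x y z => c * T x y z) = c ^ 2 * sqNorm G e T := by
  simp only [sqNorm_eq_contract, mul_mul_mul_comm c, contract_const_mul, ← sq]

end Contract

section InverseGram

variable {V : Type*} [AddCommGroup V] [Module ℝ V] {ι : Type*} [Fintype ι] [DecidableEq ι]

structure IsInverseGram (g : V →ₗ[ℝ] V →ₗ[ℝ] ℝ) (e : ι → V) (G : ι → ι → ℝ) : Prop where
  mem_span : ∀ v, v ∈ Submodule.span ℝ (Set.range e)
  gram_mul : ∀ i j, ∑ k, g (e i) (e k) * G k j = if i = j then 1 else 0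

namespace IsInverseGram

variable {g : V →ₗ[ℝ] V →ₗ[ℝ] ℝ} {e : ι → V} {G : ι → ι → ℝ}

theorem sum_repr (hg : LinearMap.BilinForm.IsSymm g) (hG : IsInverseGram g e G) (v : V) :
    ∑ k, ∑ l, (G k l * g (e k) v) • e l = v := by
  have key : ∑ k, ∑ l, (G k l • g (e k)).smulRight (e l) = LinearMap.id := by
    refine LinearMap.ext_on_range (Submodule.eq_top_iff'.mpr hG.mem_span) fun m => ?_
    simp only [LinearMap.coe_sum, Finset.sum_apply, LinearMap.smulRight_apply,
      LinearMap.smul_apply, smul_eq_mul, LinearMap.id_apply]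
    rw [sum_comm]
    calc ∑ l, ∑ k, (G k l * g (e k) (e m)) • e l
        = ∑ l, (∑ k, g (e m) (e k) * G k l) • e l := by
          simp only [Finset.sum_smul, hg.eq (e m), mul_comm (G _ _)]
      _ = e m := by simp [hG.gram_mul]
  simpa using LinearMap.congr_fun key v

theorem contract_mul (hg : LinearMap.BilinForm.IsSymm g) (hG : IsInverseGram g e G) (u v : V) :
    contract G e (fun a b => g a u * g b v) = g u v := by
  conv_rhs => rw [← hG.sum_repr hg u]
  simp only [contract, map_sum, map_smul, LinearMap.coe_sum, Finset.sum_apply,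
    LinearMap.smul_apply, smul_eq_mul, mul_assoc]

theorem contract_self (hg : LinearMap.BilinForm.IsSymm g) (hG : IsInverseGram g e G) :
    contract G e (fun a b => g a b) = Fintype.card ι := by
  calc contract G e (fun a b => g a b) = ∑ j, ∑ i, g (e j) (e i) * G i j := by
        rw [contract, sum_comm]
        exact sum_congr rfl fun j _ => sum_congr rfl fun i _ => by rw [hg.eq, mul_comm]
    _ = Fintype.card ι := by simp [hG.gram_mul]

theorem contract_comp_comm (hg : LinearMap.BilinForm.IsSymm g) (hG : IsInverseGram g e G)
    (A B : V →ₗ[ℝ] V) :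
    contract G e (fun a b => g a (A (B b))) = contract G e (fun a b => g a (B (A b))) := by
  have expand : ∀ (A B : V →ₗ[ℝ] V), contract G e (fun a b => g a (A (B b))) =
      ∑ p : ι × ι, ∑ q : ι × ι,
        G p.1 p.2 * G q.1 q.2 * g (e q.1) (B (e p.2)) * g (e p.1) (A (e q.2)) := by
    intro A B
    simp only [contract, Fintype.sum_prod_type]
    refine sum_congr rfl fun i _ => sum_congr rfl fun j _ => ?_
    conv_lhs => rw [← hG.sum_repr hg (B (e j))]
    simp only [map_sum, map_smul, smul_eq_mul, mul_sum]
    exact sum_congr rfl fun _ _ => sum_congr rfl fun _ _ => by ring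
  rw [expand, expand, sum_comm]
  exact sum_congr rfl fun _ _ => sum_congr rfl fun _ _ => by ring

theorem contract_eq_zero_of_anticomm (hg : LinearMap.BilinForm.IsSymm g)
    (hG : IsInverseGram g e G) {A B J : V →ₗ[ℝ] V} (hAB : ∀ v, A (B v) = J v)
    (hBA : ∀ v, B (A v) = -J v) : contract G e (fun a b => g a (J b)) = 0 := by
  have h := hG.contract_comp_comm hg A B
  simp only [hAB, hBA, map_neg, contract_neg] at h
  linarith

theorem contract_sum_smul (hg : LinearMap.BilinForm.IsSymm g) (hG : IsInverseGram g e G)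
    {κ : Type*} [Fintype κ] (s v s' v' : κ → V) :
    contract G e (fun a b => g (∑ m, g a (s m) • v m) (∑ m, g b (s' m) • v' m))
      = ∑ m, ∑ m', g (s m) (s' m') * g (v m) (v' m') := by
  have expand : ∀ a b, g (∑ m, g a (s m) • v m) (∑ m, g b (s' m) • v' m)
      = ∑ m, ∑ m', g (v m) (v' m') * (g a (s m) * g b (s' m')) := fun a b => by
    simp only [map_sum, map_smul, LinearMap.coe_sum, Finset.sum_apply, LinearMap.smul_apply,
      smul_eq_mul, mul_sum]
    rw [sum_comm]
    exact sum_congr rfl fun _ _ => sum_congr rfl fun _ _ => by ring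
  simp only [expand, contract_sum, contract_const_mul, hG.contract_mul hg, mul_comm]

end IsInverseGram

/-- `4n · F_α` for `ε = ε_α`, `J = J_α` and `θ = g(·, Ω)`. -/
def wTensor (g : V →ₗ[ℝ] V →ₗ[ℝ] ℝ) (J : V →ₗ[ℝ] V) (ε : ℝ) (Ω x y z : V) : ℝ :=
  ε * (g x y * g (J z) Ω) - g x z * g (J y) Ω - ε * (g (J x) y * g z Ω) + g (J x) z * g y Ω

section WTensor

variable {g : V →ₗ[ℝ] V →ₗ[ℝ] ℝ} {J : V →ₗ[ℝ] V} {ε : ℝ}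

theorem apply_map_left_eq (hJ : ∀ v, J (J v) = -v) (hgJ : ∀ x y, g (J x) (J y) = ε * g x y)
    (a b : V) : g (J a) b = -(ε * g a (J b)) := by
  have h := hgJ a (J b)
  rw [hJ, map_neg] at h
  linarith

theorem wTensor_eq_apply_sum (hg : LinearMap.BilinForm.IsSymm g) (hε : ε = 1 ∨ ε = -1)
    (hJ : ∀ v, J (J v) = -v) (hgJ : ∀ x y, g (J x) (J y) = ε * g x y) (Ω x y z : V) :
    wTensor g J ε Ω x y z =
      g z (∑ m, g y (![-x, ε • J Ω, -ε • J x, Ω] m) • ![J Ω, x, Ω, J x] m) := by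
  simp only [wTensor, Fin.sum_univ_four, Matrix.cons_val, map_add, map_smul, map_neg,
    smul_eq_mul, apply_map_left_eq hJ hgJ z, apply_map_left_eq hJ hgJ y, hg.eq x, hg.eq (J x)]
  rcases hε with rfl | rfl <;> ring

variable {e : ι → V} {G : ι → ι → ℝ}

theorem contract_contract_wTensor (hg : LinearMap.BilinForm.IsSymm g) (hG : IsInverseGram g e G)
    (hε : ε = 1 ∨ ε = -1) (hJ : ∀ v, J (J v) = -v) (hgJ : ∀ x y, g (J x) (J y) = ε * g x y)
    (Ω x x' : V) :
    contract G e (fun y y' =>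
        contract G e (fun z z' => wTensor g J ε Ω x y z * wTensor g J ε Ω x' y' z'))
      = 4 * ε * (g Ω Ω * g x x' - g x Ω * g x' Ω + g (J Ω) Ω * g x (J x')
          - g x (J Ω) * g x' (J Ω)) := by
  simp only [wTensor_eq_apply_sum hg hε hJ hgJ, hG.contract_mul hg, hG.contract_sum_smul hg]
  simp only [Fin.sum_univ_four, Matrix.cons_val, map_neg, map_smul, smul_eq_mul,
    LinearMap.neg_apply, LinearMap.smul_apply, apply_map_left_eq hJ hgJ, hJ, neg_neg]
  rw [hg.eq Ω x', hg.eq Ω (J x'), apply_map_left_eq hJ hgJ x']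
  rcases hε with rfl | rfl <;> ring

theorem sqNorm_wTensor (hg : LinearMap.BilinForm.IsSymm g) (hG : IsInverseGram g e G)
    (hε : ε = 1 ∨ ε = -1) (hJ : ∀ v, J (J v) = -v) (hgJ : ∀ x y, g (J x) (J y) = ε * g x y)
    (htr : contract G e (fun a b => g a (J b)) = 0) (Ω : V) :
    sqNorm G e (wTensor g J ε Ω) = 4 * (ε * Fintype.card ι - ε - 1) * g Ω Ω := by
  simp only [sqNorm_eq_contract, contract_contract_wTensor hg hG hε hJ hgJ, contract_const_mul,
    contract_add, contract_sub, hG.contract_self hg, hG.contract_mul hg, htr, hgJ]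
  rcases hε with rfl | rfl <;> ring

end WTensor

end InverseGram

theorem stmt_10_general (V : Type*) [AddCommGroup V] [Module ℝ V]
    (n : ℕ) (g : V →ₗ[ℝ] V →ₗ[ℝ] ℝ) (J1 J2 J3 : V →ₗ[ℝ] V)
    (θ : V → ℝ) (Ω : V) (hθ : ∀ x, θ x = g x Ω)
    (F1 F2 F3 : V → V → V → ℝ)
    (hsym : ∀ x y, g x y = g y x)
    (h1sq : ∀ v, J1 (J1 v) = -v) (h2sq : ∀ v, J2 (J2 v) = -v) (h3sq : ∀ v, J3 (J3 v) = -v)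
    (h23 : ∀ v, J2 (J3 v) = J1 v) (h32 : ∀ v, J3 (J2 v) = -J1 v)
    (h31 : ∀ v, J3 (J1 v) = J2 v) (h13 : ∀ v, J1 (J3 v) = -J2 v)
    (h12 : ∀ v, J1 (J2 v) = J3 v) (h21 : ∀ v, J2 (J1 v) = -J3 v)
    (hg1 : ∀ x y, g (J1 x) (J1 y) = g x y)
    (hg2 : ∀ x y, g (J2 x) (J2 y) = -g x y)
    (hg3 : ∀ x y, g (J3 x) (J3 y) = -g x y)
    -- the W-class form of the structure tensors (ε₁ = 1, ε₂ = ε₃ = -1)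
    (hF1 : ∀ x y z, F1 x y z = (1 / (4 * (n : ℝ))) *
      (g x y * θ (J1 z) - g x z * θ (J1 y) - g (J1 x) y * θ z + g (J1 x) z * θ y))
    (hF2 : ∀ x y z, F2 x y z = (1 / (4 * (n : ℝ))) *
      (-(g x y * θ (J2 z)) - g x z * θ (J2 y) + g (J2 x) y * θ z + g (J2 x) z * θ y))
    (hF3 : ∀ x y z, F3 x y z = (1 / (4 * (n : ℝ))) *
      (-(g x y * θ (J3 z)) - g x z * θ (J3 y) + g (J3 x) y * θ z + g (J3 x) z * θ y))
    -- a basis with inverse metric coefficients G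
    (e : Fin (4 * n) → V) (G : Fin (4 * n) → Fin (4 * n) → ℝ)
    (hbasis : ∀ v : V, v ∈ Submodule.span ℝ (Set.range e))
    (hG : ∀ i j, (∑ k, g (e i) (e k) * G k j) = if i = j then (1 : ℝ) else 0) :
    (∑ i, ∑ j, ∑ k, ∑ l, ∑ p, ∑ q,
        G i j * G k l * G p q * F1 (e i) (e k) (e p) * F1 (e j) (e l) (e q))
      = ((4 * (n : ℝ) - 1) * 1 - 1) / (4 * (n : ℝ) ^ 2) * θ Ω ∧
    (∑ i, ∑ j, ∑ k, ∑ l, ∑ p, ∑ q,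
        G i j * G k l * G p q * F2 (e i) (e k) (e p) * F2 (e j) (e l) (e q))
      = ((4 * (n : ℝ) - 1) * (-1) - 1) / (4 * (n : ℝ) ^ 2) * θ Ω ∧
    (∑ i, ∑ j, ∑ k, ∑ l, ∑ p, ∑ q,
        G i j * G k l * G p q * F3 (e i) (e k) (e p) * F3 (e j) (e l) (e q))
      = ((4 * (n : ℝ) - 1) * (-1) - 1) / (4 * (n : ℝ) ^ 2) * θ Ω := by
  have hg : LinearMap.BilinForm.IsSymm g := ⟨hsym⟩
  have hGram : IsInverseGram g e G := ⟨hbasis, hG⟩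
  have sqNorm_eq {J : V →ₗ[ℝ] V} {ε : ℝ} {F : V → V → V → ℝ} (hε : ε = 1 ∨ ε = -1)
      (hJ : ∀ v, J (J v) = -v) (hgJ : ∀ x y, g (J x) (J y) = ε * g x y)
      (htr : contract G e (fun a b => g a (J b)) = 0)
      (hF : ∀ x y z, F x y z = 1 / (4 * (n : ℝ)) * wTensor g J ε Ω x y z) :
      sqNorm G e F = ((4 * (n : ℝ) - 1) * ε - 1) / (4 * (n : ℝ) ^ 2) * θ Ω := by
    rw [show F = _ from funext₃ hF, sqNorm_const_mul, sqNorm_wTensor hg hGram hε hJ hgJ htr,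
      Fintype.card_fin, hθ]
    push_cast
    ring
  refine ⟨sqNorm_eq (.inl rfl) h1sq (by simpa using hg1)
      (hGram.contract_eq_zero_of_anticomm hg h23 h32) fun x y z => ?_,
    sqNorm_eq (.inr rfl) h2sq (by simpa using hg2)
      (hGram.contract_eq_zero_of_anticomm hg h31 h13) fun x y z => ?_,
    sqNorm_eq (.inr rfl) h3sq (by simpa using hg3)
      (hGram.contract_eq_zero_of_anticomm hg h12 h21) fun x y z => ?_⟩ <;>
  simp only [hF1, hF2, hF3, wTensor, hθ] <;> ring

/-- On a W-manifold the square norms of ∇Jα (computed from Fα via traces with the inverse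
metric over a basis) are proportional to the square of the Lee vector:
‖∇Jα‖² = ((4n-1)εα - 1)/(4n²) · θ(Ω), for ε₁ = 1, ε₂ = ε₃ = -1. -/
theorem stmt_10 (V : Type*) [AddCommGroup V] [Module ℝ V]
    (n : ℕ) (hn : 0 < n) [FiniteDimensional ℝ V] (hdim : Module.finrank ℝ V = 4 * n)
    (g : V →ₗ[ℝ] V →ₗ[ℝ] ℝ) (J1 J2 J3 : V →ₗ[ℝ] V)
    (θ : V → ℝ) (Ω : V) (hθ : ∀ x, θ x = g x Ω)
    (F1 F2 F3 : V → V → V → ℝ)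
    (hsym : ∀ x y, g x y = g y x)
    (h1sq : ∀ v, J1 (J1 v) = -v) (h2sq : ∀ v, J2 (J2 v) = -v) (h3sq : ∀ v, J3 (J3 v) = -v)
    (h23 : ∀ v, J2 (J3 v) = J1 v) (h32 : ∀ v, J3 (J2 v) = -J1 v)
    (h31 : ∀ v, J3 (J1 v) = J2 v) (h13 : ∀ v, J1 (J3 v) = -J2 v)
    (h12 : ∀ v, J1 (J2 v) = J3 v) (h21 : ∀ v, J2 (J1 v) = -J3 v)
    (hg1 : ∀ x y, g (J1 x) (J1 y) = g x y)
    (hg2 : ∀ x y, g (J2 x) (J2 y) = -g x y)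
    (hg3 : ∀ x y, g (J3 x) (J3 y) = -g x y)
    -- the W-class form of the structure tensors (ε₁ = 1, ε₂ = ε₃ = -1)
    (hF1 : ∀ x y z, F1 x y z = (1 / (4 * (n : ℝ))) *
      (g x y * θ (J1 z) - g x z * θ (J1 y) - g (J1 x) y * θ z + g (J1 x) z * θ y))
    (hF2 : ∀ x y z, F2 x y z = (1 / (4 * (n : ℝ))) *
      (-(g x y * θ (J2 z)) - g x z * θ (J2 y) + g (J2 x) y * θ z + g (J2 x) z * θ y))
    (hF3 : ∀ x y z, F3 x y z = (1 / (4 * (n : ℝ))) *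
      (-(g x y * θ (J3 z)) - g x z * θ (J3 y) + g (J3 x) y * θ z + g (J3 x) z * θ y))
    -- a basis with inverse metric coefficients G
    (e : Fin (4 * n) → V) (G : Fin (4 * n) → Fin (4 * n) → ℝ)
    (hbasis : ∀ v : V, v ∈ Submodule.span ℝ (Set.range e))
    (hG : ∀ i j, (∑ k, g (e i) (e k) * G k j) = if i = j then (1 : ℝ) else 0) :
    (∑ i, ∑ j, ∑ k, ∑ l, ∑ p, ∑ q,
        G i j * G k l * G p q * F1 (e i) (e k) (e p) * F1 (e j) (e l) (e q))
      = ((4 * (n : ℝ) - 1) * 1 - 1) / (4 * (n : ℝ) ^ 2) * θ Ω ∧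
    (∑ i, ∑ j, ∑ k, ∑ l, ∑ p, ∑ q,
        G i j * G k l * G p q * F2 (e i) (e k) (e p) * F2 (e j) (e l) (e q))
      = ((4 * (n : ℝ) - 1) * (-1) - 1) / (4 * (n : ℝ) ^ 2) * θ Ω ∧
    (∑ i, ∑ j, ∑ k, ∑ l, ∑ p, ∑ q,
        G i j * G k l * G p q * F3 (e i) (e k) (e p) * F3 (e j) (e l) (e q))
      = ((4 * (n : ℝ) - 1) * (-1) - 1) / (4 * (n : ℝ) ^ 2) * θ Ω :=
  stmt_10_general V n g J1 J2 J3 θ Ω hθ F1 F2 F3 hsym h1sq h2sq h3sq h23 h32 h31 h13 h12 h21 hg1 hg2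
    hg3 hF1 hF2 hF3 e G hbasis hG
end

section
/- For the standard hypercomplex structure on ℝ⁴ (J₁X₁=X₂, J₁X₂=-X₁, J₁X₃=-X₄, J₁X₄=X₃; J₂X₁=X₃, J₂X₂=X₄, J₂X₃=-X₁, J₂X₄=-X₂; J₃X₁=-X₄, J₃X₂=X₃, J₃X₃=-X₂, J₃X₄=X₁) and the Lie bracket defined by [X₁,X₄]=[X₂,X₃]=λ₁X₁+λ₂X₂+λ₃X₃+λ₄X₄, [X₁,X₃]=-[X₂,X₄]=λ₂X₁-λ₁X₂+λ₄X₃-λ₃X₄, [X₁,X₂]=[X₃,X₄]=0, each Jα is an Abelian structure: [Jα x, Jα y] = [x, y] for all x, y and all α = 1,2,3. -/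
/-!
Both `B (J x) (J y)` and `B x y` are alternating bilinear in `(x, y)`, so they agree as soon as
they agree on basis pairs `(X i, X j)` with `i < j`. Each `Jα` permutes the basis up to sign, and
the resulting six identities per `Jα` reduce to the three relations
`[X₁,X₂] = [X₃,X₄]`, `[X₁,X₃] = -[X₂,X₄]`, `[X₁,X₄] = [X₂,X₃]`.
-/

namespace LinearMap

variable {R M P : Type*} [CommSemiring R] [AddCommMonoid M] [Module R M]
  [AddCommGroup P] [Module R P]

theorem isAlt_of_eq_neg_swap [IsAddTorsionFree P] {B : M →ₗ[R] M →ₗ[R] P}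
    (h : ∀ x y, B x y = -B y x) : B.IsAlt :=
  fun x => self_eq_neg.mp (h x x)

theorem IsAlt.compl₁₂ {B : M →ₗ[R] M →ₗ[R] P} (hB : B.IsAlt) (J : M →ₗ[R] M) :
    (B.compl₁₂ J J).IsAlt :=
  fun x => hB (J x)

theorem IsAlt.ext_basis_of_lt {ι : Type*} [LinearOrder ι] (b : Module.Basis ι R M)
    {B B' : M →ₗ[R] M →ₗ[R] P} (hB : B.IsAlt) (hB' : B'.IsAlt)
    (h : ∀ i j, i < j → B (b i) (b j) = B' (b i) (b j)) : B = B' := by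
  refine ext_basis b b fun i j => ?_
  rcases lt_trichotomy i j with hij | rfl | hji
  · exact h i j hij
  · rw [hB, hB']
  · rw [← hB.neg, ← hB'.neg, h j i hji]

end LinearMap

/-- For the standard hypercomplex structure on ℝ⁴ and the Lie bracket of the paper's
example, each Jα is an Abelian structure: [Jα x, Jα y] = [x,y]. -/
theorem stmt_13 (l1 l2 l3 l4 : ℝ)
    (X : Fin 4 → Fin 4 → ℝ) (hX : ∀ i, X i = Pi.single i 1)
    (J1 J2 J3 : (Fin 4 → ℝ) →ₗ[ℝ] (Fin 4 → ℝ))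
    (hJ1 : J1 (X 0) = X 1 ∧ J1 (X 1) = -X 0 ∧ J1 (X 2) = -X 3 ∧ J1 (X 3) = X 2)
    (hJ2 : J2 (X 0) = X 2 ∧ J2 (X 1) = X 3 ∧ J2 (X 2) = -X 0 ∧ J2 (X 3) = -X 1)
    (hJ3 : J3 (X 0) = -X 3 ∧ J3 (X 1) = X 2 ∧ J3 (X 2) = -X 1 ∧ J3 (X 3) = X 0)
    (B : (Fin 4 → ℝ) →ₗ[ℝ] (Fin 4 → ℝ) →ₗ[ℝ] (Fin 4 → ℝ))
    (hanti : ∀ x y, B x y = -B y x)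
    (hB14 : B (X 0) (X 3) = l1 • X 0 + l2 • X 1 + l3 • X 2 + l4 • X 3)
    (hB23 : B (X 1) (X 2) = l1 • X 0 + l2 • X 1 + l3 • X 2 + l4 • X 3)
    (hB13 : B (X 0) (X 2) = l2 • X 0 - l1 • X 1 + l4 • X 2 - l3 • X 3)
    (hB24 : B (X 1) (X 3) = -(l2 • X 0 - l1 • X 1 + l4 • X 2 - l3 • X 3))
    (hB12 : B (X 0) (X 1) = 0)
    (hB34 : B (X 2) (X 3) = 0) :
    (∀ x y, B (J1 x) (J1 y) = B x y) ∧
    (∀ x y, B (J2 x) (J2 y) = B x y) ∧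
    (∀ x y, B (J3 x) (J3 y) = B x y) := by
  have hB : B.IsAlt := LinearMap.isAlt_of_eq_neg_swap hanti
  have hbasis : ∀ i, Pi.basisFun ℝ (Fin 4) i = X i := fun i => by rw [hX, Pi.basisFun_apply]
  have abelian (J : (Fin 4 → ℝ) →ₗ[ℝ] (Fin 4 → ℝ))
      (hJ : ∀ i j : Fin 4, i < j → B (J (X i)) (J (X j)) = B (X i) (X j)) :
      ∀ x y, B (J x) (J y) = B x y :=
    LinearMap.congr_fun₂ <| (hB.compl₁₂ J).ext_basis_of_lt (Pi.basisFun ℝ (Fin 4)) hB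
      (by simpa only [hbasis, LinearMap.compl₁₂_apply] using hJ)
  have h01 : B (X 0) (X 1) = B (X 2) (X 3) := hB12.trans hB34.symm
  have h02 : B (X 0) (X 2) = -B (X 1) (X 3) := by rw [hB13, hB24, neg_neg]
  have h03 : B (X 0) (X 3) = B (X 1) (X 2) := hB14.trans hB23.symm
  have hswap : ∀ i j : Fin 4, j < i → B (X i) (X j) = -B (X j) (X i) := fun i j _ => hanti _ _
  obtain ⟨h1a, h1b, h1c, h1d⟩ := hJ1
  obtain ⟨h2a, h2b, h2c, h2d⟩ := hJ2
  obtain ⟨h3a, h3b, h3c, h3d⟩ := hJ3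
  refine ⟨abelian J1 ?_, abelian J2 ?_, abelian J3 ?_⟩ <;>
    intro i j hij <;> fin_cases i <;> fin_cases j <;> revert hij <;>
    simp [h1a, h1b, h1c, h1d, h2a, h2b, h2c, h2d, h3a, h3b, h3c, h3d, h01, h02, h03, hswap]
end

section
/- For the 4-dimensional Lie group example, the curvature tensor R(x,y)z = ∇_x∇_y z - ∇_y∇_x z - ∇_{[x,y]}z computed from the given connection components has R(X₁,X₂,X₂,X₁) = λ₁² + λ₂², R(X₁,X₃,X₃,X₁) = λ₄² - λ₂², R(X₃,X₄,X₄,X₃) = -λ₃² - λ₄², and the scalar curvature equals τ = 6(λ₁² + λ₂² - λ₃² - λ₄²). -/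
/-!
By bilinearity, each `R(Xᵢ,Xⱼ,Xⱼ,Xᵢ)` is a quadratic polynomial in the `λ`'s read off from the
tables of `∇` and of the bracket on the basis, the brackets `[Xⱼ,Xᵢ]` with `j > i` coming from
antisymmetry. The diagonal terms vanish because `[x,x] = 0`, so `τ` is the signed sum of the
twelve off-diagonal components.
-/

theorem apply_self_eq_zero_of_antisymm (K : Type*) {M N : Type*} [DivisionRing K] [CharZero K]
    [AddCommGroup N] [Module K N] (B : M → M → N) (h : ∀ x y, B x y = -B y x) (x : M) :
    B x x = 0 := by
  have h2 : (2 : K) • B x x = 0 := by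
    rw [two_smul]
    nth_rewrite 1 [h]
    exact neg_add_cancel _
  exact (smul_eq_zero.mp h2).resolve_left two_ne_zero

/-- For the 4-dimensional example, the curvature tensor of the Levi-Civita connection has
R(X₁,X₂,X₂,X₁)=λ₁²+λ₂², R(X₁,X₃,X₃,X₁)=λ₄²-λ₂², R(X₃,X₄,X₄,X₃)=-λ₃²-λ₄², and the
scalar curvature is τ = 6(λ₁²+λ₂²-λ₃²-λ₄²). -/
theorem stmt_16 (l1 l2 l3 l4 : ℝ)
    (X : Fin 4 → Fin 4 → ℝ) (hX : ∀ i, X i = Pi.single i 1)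
    (B : (Fin 4 → ℝ) →ₗ[ℝ] (Fin 4 → ℝ) →ₗ[ℝ] (Fin 4 → ℝ))
    (hanti : ∀ x y, B x y = -B y x)
    (hB14 : B (X 0) (X 3) = l1 • X 0 + l2 • X 1 + l3 • X 2 + l4 • X 3)
    (hB23 : B (X 1) (X 2) = l1 • X 0 + l2 • X 1 + l3 • X 2 + l4 • X 3)
    (hB13 : B (X 0) (X 2) = l2 • X 0 - l1 • X 1 + l4 • X 2 - l3 • X 3)
    (hB24 : B (X 1) (X 3) = -(l2 • X 0 - l1 • X 1 + l4 • X 2 - l3 • X 3))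
    (hB12 : B (X 0) (X 1) = 0)
    (hB34 : B (X 2) (X 3) = 0)
    (g : (Fin 4 → ℝ) → (Fin 4 → ℝ) → ℝ)
    (hg : ∀ x y, g x y = x 0 * y 0 + x 1 * y 1 - x 2 * y 2 - x 3 * y 3)
    (nab : (Fin 4 → ℝ) →ₗ[ℝ] (Fin 4 → ℝ) →ₗ[ℝ] (Fin 4 → ℝ))
    (hn00 : nab (X 0) (X 0) = l2 • X 2 + l1 • X 3)
    (hn11 : nab (X 1) (X 1) = l2 • X 2 + l1 • X 3)
    (hn02 : nab (X 0) (X 2) = l2 • X 0 - l3 • X 3)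
    (hn31 : nab (X 3) (X 1) = l2 • X 0 - l3 • X 3)
    (hn03 : nab (X 0) (X 3) = l1 • X 0 + l3 • X 2)
    (hn21 : nab (X 2) (X 1) = -(l1 • X 0 + l3 • X 2))
    (hn12 : nab (X 1) (X 2) = l2 • X 1 + l4 • X 3)
    (hn30 : nab (X 3) (X 0) = -(l2 • X 1 + l4 • X 3))
    (hn13 : nab (X 1) (X 3) = l1 • X 1 - l4 • X 2)
    (hn20 : nab (X 2) (X 0) = l1 • X 1 - l4 • X 2)
    (hn22 : nab (X 2) (X 2) = -(l4 • X 0) - l3 • X 1)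
    (hn33 : nab (X 3) (X 3) = -(l4 • X 0) - l3 • X 1)
    (hn01 : nab (X 0) (X 1) = 0) (hn10 : nab (X 1) (X 0) = 0)
    (hn23 : nab (X 2) (X 3) = 0) (hn32 : nab (X 3) (X 2) = 0)
    (R : (Fin 4 → ℝ) → (Fin 4 → ℝ) → (Fin 4 → ℝ) → (Fin 4 → ℝ))
    (hR : ∀ x y z, R x y z = nab x (nab y z) - nab y (nab x z) - nab (B x y) z)
    (eps : Fin 4 → ℝ) (heps : eps = ![1, 1, -1, -1]) :
    g (R (X 0) (X 1) (X 1)) (X 0) = l1 ^ 2 + l2 ^ 2 ∧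
    g (R (X 0) (X 2) (X 2)) (X 0) = l4 ^ 2 - l2 ^ 2 ∧
    g (R (X 2) (X 3) (X 3)) (X 2) = -l3 ^ 2 - l4 ^ 2 ∧
    (∑ i, ∑ j, eps i * eps j * g (R (X i) (X j) (X j)) (X i))
      = 6 * (l1 ^ 2 + l2 ^ 2 - l3 ^ 2 - l4 ^ 2) := by
  have hB_self : ∀ x, B x x = 0 := apply_self_eq_zero_of_antisymm ℝ (fun x y => B x y) hanti
  have sectional : ∀ i j, g (R (X i) (X j) (X j)) (X i) =
      !![0, l1 ^ 2 + l2 ^ 2, l4 ^ 2 - l2 ^ 2, l4 ^ 2 - l1 ^ 2;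
         l1 ^ 2 + l2 ^ 2, 0, l3 ^ 2 - l2 ^ 2, l3 ^ 2 - l1 ^ 2;
         l4 ^ 2 - l2 ^ 2, l3 ^ 2 - l2 ^ 2, 0, -l3 ^ 2 - l4 ^ 2;
         l4 ^ 2 - l1 ^ 2, l3 ^ 2 - l1 ^ 2, -l3 ^ 2 - l4 ^ 2, 0] i j := by
    intro i j
    fin_cases i <;> fin_cases j <;>
    · simp only [Fin.reduceFinMk, Fin.isValue, hR, hB_self,
        hanti (X 1) (X 0), hanti (X 2) (X 0), hanti (X 3) (X 0),
        hanti (X 2) (X 1), hanti (X 3) (X 1), hanti (X 3) (X 2),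
        hB12, hB13, hB14, hB23, hB24, hB34,
        hn00, hn01, hn02, hn03, hn10, hn11, hn12, hn13,
        hn20, hn21, hn22, hn23, hn30, hn31, hn32, hn33,
        map_add, map_sub, map_smul, map_neg, map_zero, LinearMap.zero_apply,
        LinearMap.add_apply, LinearMap.sub_apply, LinearMap.neg_apply, LinearMap.smul_apply]
      simp [hg, hX] <;> ring
  refine ⟨sectional 0 1, sectional 0 2, sectional 2 3, ?_⟩
  simp [heps, Fin.sum_univ_four, sectional]
  ring
end

section
/- For the 4-dimensional Lie group example, the connection D defined by D_{X1}Xj = -½λ₃ J₁Xj·(sign convention as given): D_{X1}X1=-½λ₃X₂, D_{X1}X2=½λ₃X₁, D_{X1}X3=-½λ₃X₄, D_{X1}X4=½λ₃X₃, D_{X2}X1=½λ₄X₂, D_{X2}X2=-½λ₄X₁, D_{X2}X3=½λ₄X₄, D_{X2}X4=-½λ₄X₃, D_{X3}X1=½λ₁X₂, D_{X3}X2=-½λ₁X₁, D_{X3}X3=½λ₁X₄, D_{X3}X4=-½λ₁X₃, D_{X4}X1=-½λ₂X₂, D_{X4}X2=½λ₂X₁, D_{X4}X3=-½λ₂X₄,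 D_{X4}X4=½λ₂X₃, has vanishing curvature: K(x,y)z = D_xD_yz - D_yD_xz - D_{[x,y]}z = 0 for all basis vectors. -/
/-!
Every `D_{X_i}` is a multiple of one and the same complex structure `J`
(`X₁ ↦ X₂ ↦ -X₁`, `X₃ ↦ X₄ ↦ -X₃`), so `D_x = φ(x) J` for a linear form `φ`. Hence
`D_x D_y - D_y D_x = (φ(x) φ(y) - φ(y) φ(x)) J² = 0` and the curvature reduces to
`-φ([x, y]) J`; it vanishes because `φ` kills the two vectors spanning the derived algebra.
-/

namespace LinearMap

variable {R V : Type*} [CommRing R] [AddCommGroup V] [Module R V]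

def curvature (B D : V →ₗ[R] V →ₗ[R] V) (x y z : V) : V :=
  D x (D y z) - D y (D x z) - D (B x y) z

theorem curvature_smulRight_eq_zero (B : V →ₗ[R] V →ₗ[R] V) (φ : V →ₗ[R] R) (J : V →ₗ[R] V)
    (hφB : ∀ x y, φ (B x y) = 0) (x y z : V) : curvature B (φ.smulRight J) x y z = 0 := by
  simp only [curvature, smulRight_apply, smul_apply, map_smul, smul_smul, hφB, zero_smul,
    mul_comm (φ x), sub_self, zero_apply]

end LinearMap

section

variable {K V : Type*} [Field K] [AddCommGroup V] [Module K V] (X : Module.Basis (Fin 4) K V)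

-- Indices are 0-based: `X 0` is the paper's `X₁`.
noncomputable def complexStructure : V →ₗ[K] V := X.constr K ![X 1, -X 0, X 3, -X 2]

noncomputable def connectionForm (l1 l2 l3 l4 : K) : V →ₗ[K] K :=
  X.constr K ![-(1/2 * l3), 1/2 * l4, 1/2 * l1, -(1/2 * l2)]

theorem connectionForm_bracket_eq_zero [CharZero K] {l1 l2 l3 l4 : K} (B : V →ₗ[K] V →ₗ[K] V)
    (hanti : ∀ x y, B x y = -B y x)
    (hB14 : B (X 0) (X 3) = l1 • X 0 + l2 • X 1 + l3 • X 2 + l4 • X 3)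
    (hB23 : B (X 1) (X 2) = l1 • X 0 + l2 • X 1 + l3 • X 2 + l4 • X 3)
    (hB13 : B (X 0) (X 2) = l2 • X 0 - l1 • X 1 + l4 • X 2 - l3 • X 3)
    (hB24 : B (X 1) (X 3) = -(l2 • X 0 - l1 • X 1 + l4 • X 2 - l3 • X 3))
    (hB12 : B (X 0) (X 1) = 0)
    (hB34 : B (X 2) (X 3) = 0) (x y : V) :
    connectionForm X l1 l2 l3 l4 (B x y) = 0 := by
  set φ := connectionForm X l1 l2 l3 l4
  have hskew : ∀ x y, φ (B x y) = -φ (B y x) := fun x y => by rw [hanti, map_neg]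
  have hupper : ∀ i j, i < j → φ (B (X i) (X j)) = 0 := by
    intro i j hij
    fin_cases i <;> fin_cases j <;>
      simp only [Fin.reduceFinMk, Fin.reduceLT, φ, connectionForm, hB12, hB13, hB14, hB23, hB24,
        hB34, map_add, map_sub, map_neg, map_smul, map_zero, Module.Basis.constr_basis,
        Matrix.cons_val, smul_eq_mul] at hij ⊢ <;>
      ring
  suffices B.compr₂ φ = 0 from congr($this x y)
  refine LinearMap.ext_basis X X fun i j => ?_
  rcases lt_trichotomy i j with h | rfl | h
  · exact hupper i j h
  · exact self_eq_neg.mp (hskew (X i) (X i))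
  · simp [hskew (X i), hupper j i h]

end

/-- For the 4-dimensional example, the natural connection D given by the displayed
components is flat: K(x,y)z = D_x D_y z - D_y D_x z - D_{[x,y]} z = 0 on basis vectors. -/
theorem stmt_17 (l1 l2 l3 l4 : ℝ)
    (X : Fin 4 → Fin 4 → ℝ) (hX : ∀ i, X i = Pi.single i 1)
    (B : (Fin 4 → ℝ) →ₗ[ℝ] (Fin 4 → ℝ) →ₗ[ℝ] (Fin 4 → ℝ))
    (hanti : ∀ x y, B x y = -B y x)
    (hB14 : B (X 0) (X 3) = l1 • X 0 + l2 • X 1 + l3 • X 2 + l4 • X 3)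
    (hB23 : B (X 1) (X 2) = l1 • X 0 + l2 • X 1 + l3 • X 2 + l4 • X 3)
    (hB13 : B (X 0) (X 2) = l2 • X 0 - l1 • X 1 + l4 • X 2 - l3 • X 3)
    (hB24 : B (X 1) (X 3) = -(l2 • X 0 - l1 • X 1 + l4 • X 2 - l3 • X 3))
    (hB12 : B (X 0) (X 1) = 0)
    (hB34 : B (X 2) (X 3) = 0)
    (D : (Fin 4 → ℝ) →ₗ[ℝ] (Fin 4 → ℝ) →ₗ[ℝ] (Fin 4 → ℝ))
    (hD00 : D (X 0) (X 0) = -((1/2) * l3) • X 1)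
    (hD01 : D (X 0) (X 1) = ((1/2) * l3) • X 0)
    (hD02 : D (X 0) (X 2) = -((1/2) * l3) • X 3)
    (hD03 : D (X 0) (X 3) = ((1/2) * l3) • X 2)
    (hD10 : D (X 1) (X 0) = ((1/2) * l4) • X 1)
    (hD11 : D (X 1) (X 1) = -((1/2) * l4) • X 0)
    (hD12 : D (X 1) (X 2) = ((1/2) * l4) • X 3)
    (hD13 : D (X 1) (X 3) = -((1/2) * l4) • X 2)
    (hD20 : D (X 2) (X 0) = ((1/2) * l1) • X 1)
    (hD21 : D (X 2) (X 1) = -((1/2) * l1) • X 0)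
    (hD22 : D (X 2) (X 2) = ((1/2) * l1) • X 3)
    (hD23 : D (X 2) (X 3) = -((1/2) * l1) • X 2)
    (hD30 : D (X 3) (X 0) = -((1/2) * l2) • X 1)
    (hD31 : D (X 3) (X 1) = ((1/2) * l2) • X 0)
    (hD32 : D (X 3) (X 2) = -((1/2) * l2) • X 3)
    (hD33 : D (X 3) (X 3) = ((1/2) * l2) • X 2) :
    ∀ i j k, D (X i) (D (X j) (X k)) - D (X j) (D (X i) (X k)) - D (B (X i) (X j)) (X k) = 0 := by
  obtain rfl : X = Pi.basisFun ℝ (Fin 4) := funext fun i => by rw [hX, Pi.basisFun_apply]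
  set X := Pi.basisFun ℝ (Fin 4)
  have hDJ : D = (connectionForm X l1 l2 l3 l4).smulRight (complexStructure X) := by
    refine LinearMap.ext_basis X X fun i k => ?_
    fin_cases i <;> fin_cases k <;>
      simp only [Fin.reduceFinMk, LinearMap.smulRight_apply, LinearMap.smul_apply, connectionForm,
        complexStructure, Module.Basis.constr_basis, Matrix.cons_val, hD00, hD01, hD02, hD03, hD10, hD11, hD12, hD13,
        hD20, hD21, hD22, hD23, hD30, hD31, hD32, hD33] <;>
      module
  intro i j k
  subst hDJ
  exact LinearMap.curvature_smulRight_eq_zero B _ _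
    (connectionForm_bracket_eq_zero X B hanti hB14 hB23 hB13 hB24 hB12 hB34) _ _ _
end
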